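/- arXiv:1508.03979 — 8 statements merged into one kernel-verified Lean document; each statement's English description precedes it below -/
import Mathlib

section
/- Let a, b, c, d be points in the Euclidean plane ℝ² with b ≠ d, such that a and c lie strictly on opposite sides of the line through b and d. Let a', b', c', d' be points in ℝ² such that dist a' b' = dist a b, dist b' c' = dist b c, dist a' c' = dist a d + dist d c, d' lies on the segment [a', c'], and dist a' d' = dist a d. Then ∠ a d b + ∠ b d c < π if and only if dist b' d' < dist b d; moreover, in this case one also has ∠ b' a' d' < ∠ b a d and ∠ b' c' d' < ∠ b c d. -/
/-!
Straightening the broken line `a d c` into the segment `a' c'` keeps the four outer sides and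
changes only the diagonal `b d`. Stewart's theorem in `a' b' c'` together with the law of cosines
at `d` gives `(p + q) (|bd|² - |b'd'|²) = 2 p q |bd| (cos ∠adb + cos ∠bdc)` with `p = |ad|`,
`q = |dc|`, and the sign of `cos ∠adb + cos ∠bdc` is that of `π - ∠adb - ∠bdc`. Once the diagonal
has shrunk, the hinge theorem in the triangles at `a` and at `c` makes the angles there shrink too.
-/

open EuclideanGeometry Real

theorem Real.add_lt_pi_iff_cos_add_cos_pos {α β : ℝ} (hα₀ : 0 ≤ α) (hα : α ≤ π) (hβ₀ : 0 ≤ β)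
    (hβ : β ≤ π) : α + β < π ↔ 0 < cos α + cos β := by
  have key : α < π - β ↔ cos (π - β) < cos α :=
    (strictAntiOn_cos.lt_iff_gt ⟨by linarith, by linarith⟩ ⟨hα₀, hα⟩).symm
  rw [cos_pi_sub] at key
  constructor <;> intro h
  · linarith [key.1 (by linarith)]
  · linarith [key.2 (by linarith)]

namespace EuclideanGeometry

variable {V P : Type*} [NormedAddCommGroup V] [InnerProductSpace ℝ V] [MetricSpace P]
  [NormedAddTorsor V P]

/-- **Hinge theorem**. -/
theorem angle_lt_angle_of_dist_lt {a b c a' b' c' : P} (hab : dist a' b' = dist a b)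
    (hac : dist a' c' = dist a c) (hbc : dist b' c' < dist b c) : ∠ b' a' c' < ∠ b a c := by
  contrapose! hbc
  have hcos : cos (∠ b' a' c') ≤ cos (∠ b a c) :=
    cos_le_cos_of_nonneg_of_le_pi (angle_nonneg _ _ _) (angle_le_pi _ _ _) hbc
  have hsq : dist b c * dist b c ≤ dist b' c' * dist b' c' := by
    rw [law_cos b a c, law_cos b' a' c', dist_comm b' a', dist_comm c' a', dist_comm b a,
      dist_comm c a, hab, hac]
    have : 0 ≤ dist a b * dist a c := by positivity
    nlinarith [mul_le_mul_of_nonneg_left hcos this]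
  exact (mul_self_le_mul_self_iff dist_nonneg dist_nonneg).2 hsq

theorem dist_add_dist_mul_sq_sub_sq_eq {a b c d a' b' c' d' : P} (hd' : ∠ a' d' c' = π)
    (had : dist a' d' = dist a d) (hdc : dist d' c' = dist d c) (hab : dist a' b' = dist a b)
    (hbc : dist b' c' = dist b c) :
    (dist a d + dist d c) * (dist b d ^ 2 - dist b' d' ^ 2) =
      2 * dist a d * dist d c * dist b d * (cos (∠ a d b) + cos (∠ b d c)) := by
  have stewart := dist_sq_mul_dist_add_dist_sq_mul_dist b' a' c' d' hd'
  rw [dist_eq_add_dist_of_angle_eq_pi hd', dist_comm b' a', hab, hbc, dist_comm c' d', had, hdc]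
    at stewart
  have hadb := law_cos a d b
  have hbdc := law_cos b d c
  rw [dist_comm c d] at hbdc
  linear_combination stewart - dist d c * hadb - dist a d * hbdc

theorem dist_lt_dist_iff_angle_add_angle_lt_pi {a b c d a' b' c' d' : P} (ha : a ≠ d)
    (hb : b ≠ d) (hc : c ≠ d) (hd' : ∠ a' d' c' = π) (had : dist a' d' = dist a d)
    (hdc : dist d' c' = dist d c) (hab : dist a' b' = dist a b) (hbc : dist b' c' = dist b c) :
    dist b' d' < dist b d ↔ ∠ a d b + ∠ b d c < π := by
  have hp : 0 < dist a d := dist_pos.2 ha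
  have hq : 0 < dist d c := dist_pos.2 hc.symm
  have hr : 0 < dist b d := dist_pos.2 hb
  rw [Real.add_lt_pi_iff_cos_add_cos_pos (angle_nonneg _ _ _) (angle_le_pi _ _ _)
      (angle_nonneg _ _ _) (angle_le_pi _ _ _),
    ← pow_lt_pow_iff_left₀ dist_nonneg dist_nonneg two_ne_zero, ← sub_pos,
    ← mul_pos_iff_of_pos_left (add_pos hp hq), dist_add_dist_mul_sq_sub_sq_eq hd' had hdc hab hbc]
  exact mul_pos_iff_of_pos_left (by positivity)

end EuclideanGeometry

/-- Aleksandrov's Lemma (strict `<` case). -/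
theorem aleksandrov_lemma_lt
    (a b c d a' b' c' d' : EuclideanSpace ℝ (Fin 2))
    (hbd : b ≠ d)
    (hopp : (affineSpan ℝ ({b, d} : Set (EuclideanSpace ℝ (Fin 2)))).SOppSide a c)
    (h1 : dist a' b' = dist a b)
    (h2 : dist b' c' = dist b c)
    (h3 : dist a' c' = dist a d + dist d c)
    (h4 : d' ∈ segment ℝ a' c')
    (h5 : dist a' d' = dist a d) :
    (∠ a d b + ∠ b d c < Real.pi ↔ dist b' d' < dist b d) ∧
      (∠ a d b + ∠ b d c < Real.pi →
        ∠ b' a' d' < ∠ b a d ∧ ∠ b' c' d' < ∠ b c d) := by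
  have hd : d ∈ affineSpan ℝ ({b, d} : Set (EuclideanSpace ℝ (Fin 2))) :=
    mem_affineSpan ℝ (by simp)
  have had : a ≠ d := fun h => hopp.left_notMem (h ▸ hd)
  have hcd : c ≠ d := fun h => hopp.right_notMem (h ▸ hd)
  have hdc' : dist d' c' = dist d c := by linarith [dist_add_dist_of_mem_segment h4]
  have hd'a' : d' ≠ a' := dist_ne_zero.1 (by rwa [dist_comm, h5, dist_ne_zero])
  have hd'c' : d' ≠ c' := dist_ne_zero.1 (by rwa [hdc', dist_ne_zero, ne_comm])
  have hd' : ∠ a' d' c' = π := Sbtw.angle₁₂₃_eq_pi ⟨mem_segment_iff_wbtw.1 h4, hd'a', hd'c'⟩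
  have key := dist_lt_dist_iff_angle_add_angle_lt_pi had hbd hcd hd' h5 hdc' h1 h2
  refine ⟨key.symm, fun h => ⟨angle_lt_angle_of_dist_lt h1 h5 (key.2 h), ?_⟩⟩
  exact angle_lt_angle_of_dist_lt (by rw [dist_comm, h2, dist_comm])
    (by rw [dist_comm, hdc', dist_comm]) (key.2 h)
end

section
/- Let a, b, c, d be points in the Euclidean plane ℝ² with b ≠ d, such that a and c lie strictly on opposite sides of the line through b and d. Let a', b', c', d' be points in ℝ² such that dist a' b' = dist a b, dist b' c' = dist b c, dist a' c' = dist a d + dist d c, d' lies on the segment [a', c'], and dist a' d' = dist a d. Then ∠ a d b + ∠ b d c > π if and only if dist b' d' > dist b d; moreover, in this case one also has ∠ b' a' d' > ∠ b a d and ∠ b' c' d' > ∠ b c d. -/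
/-!
Fix `p = dist a d`, `q = dist d c`, `r = dist b d` and write `α = ∠ a d b`, `β = ∠ b d c`.
Weighting the laws of cosines in the triangles `a d b` and `b d c` by `q` and `p` gives
`q |ab|² + p |bc|² = (p + q) (r² + p q) - 2 p q r (cos α + cos β)`, while Stewart's theorem for
the straightened configuration, where `α + β = π`, gives the same left side with the
cosine term absent and `r` replaced by `r' = dist b' d'`. Hence
`(p + q) (r'² - r²) = -2 p q r (cos α + cos β)`, so `r < r'` exactly when
`cos α + cos β < 0`, i.e. when `α + β > π`. The statements about the angles at `a'` and `c'`
then follow from the hinge theorem.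
-/

open EuclideanGeometry Real

theorem Real.cos_add_cos_neg_iff {x y : ℝ} (hx : x ∈ Set.Icc 0 π) (hy : y ∈ Set.Icc 0 π) :
    cos x + cos y < 0 ↔ π < x + y := by
  have hy' : π - y ∈ Set.Icc 0 π := ⟨by linarith [hy.2], by linarith [hy.1]⟩
  have hanti := strictAntiOn_cos.lt_iff_gt hx hy'
  rw [cos_pi_sub] at hanti
  constructor
  · intro h
    linarith [hanti.1 (by linarith)]
  · intro h
    linarith [hanti.2 (by linarith)]

namespace EuclideanGeometry

variable {V P : Type*} [NormedAddCommGroup V] [InnerProductSpace ℝ V] [MetricSpace P]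
  [NormedAddTorsor V P]

theorem angle_lt_angle_iff_dist_lt_dist {a b c a' b' c' : P} (hb : dist a' b' = dist a b)
    (hc : dist a' c' = dist a c) : ∠ b a c < ∠ b' a' c' ↔ dist b c < dist b' c' := by
  rcases eq_or_ne a b with rfl | hab
  · rw [dist_self, dist_eq_zero] at hb
    subst hb
    simp [hc]
  rcases eq_or_ne a c with rfl | hac
  · rw [dist_self, dist_eq_zero] at hc
    subst hc
    simp [dist_comm, hb]
  have hpos : 0 < 2 * dist b a * dist c a := by
    have := dist_pos.2 hab.symm
    have := dist_pos.2 hac.symm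
    positivity
  have hcos := law_cos b a c
  have hcos' := law_cos b' a' c'
  rw [dist_comm b' a', dist_comm c' a', hb, hc, dist_comm a b, dist_comm a c] at hcos'
  have hdiff : dist b' c' ^ 2 - dist b c ^ 2 =
      2 * dist b a * dist c a * (cos (∠ b a c) - cos (∠ b' a' c')) := by
    linear_combination hcos' - hcos
  calc ∠ b a c < ∠ b' a' c'
      ↔ cos (∠ b' a' c') < cos (∠ b a c) :=
        (strictAntiOn_cos.lt_iff_gt ⟨angle_nonneg _ _ _, angle_le_pi _ _ _⟩
          ⟨angle_nonneg _ _ _, angle_le_pi _ _ _⟩).symm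
    _ ↔ 0 < dist b' c' ^ 2 - dist b c ^ 2 := by rw [hdiff, mul_pos_iff_of_pos_left hpos, sub_pos]
    _ ↔ dist b c < dist b' c' := by
      rw [sub_pos, pow_lt_pow_iff_left₀ dist_nonneg dist_nonneg two_ne_zero]

theorem dist_sq_mul_dist_add_dist_sq_mul_dist_eq_sub_cos_add_cos (a b c d : P) :
    dist a b ^ 2 * dist c d + dist b c ^ 2 * dist a d =
      (dist a d + dist c d) * (dist b d ^ 2 + dist a d * dist c d) -
        2 * dist a d * dist c d * dist b d * (cos (∠ a d b) + cos (∠ b d c)) := by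
  have hα := law_cos b d a
  have hγ := law_cos b d c
  rw [angle_comm b d a, dist_comm b a] at hα
  linear_combination dist c d * hα + dist a d * hγ

theorem dist_lt_dist_iff_pi_lt_angle_add_angle {a b c d a' b' c' d' : P} (hbd : b ≠ d)
    (hd' : Sbtw ℝ a' d' c') (ha : dist a' b' = dist a b) (hc : dist b' c' = dist b c)
    (had : dist a' d' = dist a d) (hcd : dist c' d' = dist c d) :
    dist b d < dist b' d' ↔ π < ∠ a d b + ∠ b d c := by
  have hpq : 0 < dist a d + dist c d := by
    rw [← had, ← hcd]
    have := dist_pos.2 hd'.left_ne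
    positivity
  have hpqr : 0 < 2 * dist a d * dist c d * dist b d := by
    rw [← had, ← hcd]
    have := dist_pos.2 hd'.left_ne
    have := dist_pos.2 hd'.ne_right.symm
    have := dist_pos.2 hbd
    positivity
  have hstewart := dist_sq_mul_dist_add_dist_sq_mul_dist b' a' c' d' hd'.angle₁₂₃_eq_pi
  rw [dist_eq_add_dist_of_angle_eq_pi hd'.angle₁₂₃_eq_pi, dist_comm b' a', ha, hc, had,
    hcd] at hstewart
  have hbent := dist_sq_mul_dist_add_dist_sq_mul_dist_eq_sub_cos_add_cos a b c d
  have hdiff : (dist a d + dist c d) * (dist b' d' ^ 2 - dist b d ^ 2) =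
      2 * dist a d * dist c d * dist b d * -(cos (∠ a d b) + cos (∠ b d c)) := by
    linear_combination hbent - hstewart
  calc dist b d < dist b' d'
      ↔ 0 < dist b' d' ^ 2 - dist b d ^ 2 := by
        rw [sub_pos, pow_lt_pow_iff_left₀ dist_nonneg dist_nonneg two_ne_zero]
    _ ↔ 0 < 2 * dist a d * dist c d * dist b d * -(cos (∠ a d b) + cos (∠ b d c)) := by
        rw [← hdiff, mul_pos_iff_of_pos_left hpq]
    _ ↔ π < ∠ a d b + ∠ b d c := by
        rw [mul_pos_iff_of_pos_left hpqr, neg_pos]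
        exact cos_add_cos_neg_iff ⟨angle_nonneg _ _ _, angle_le_pi _ _ _⟩
          ⟨angle_nonneg _ _ _, angle_le_pi _ _ _⟩

end EuclideanGeometry

/-- Aleksandrov's Lemma (strict `>` case). -/
theorem aleksandrov_lemma_gt
    (a b c d a' b' c' d' : EuclideanSpace ℝ (Fin 2))
    (hbd : b ≠ d)
    (hopp : (affineSpan ℝ ({b, d} : Set (EuclideanSpace ℝ (Fin 2)))).SOppSide a c)
    (h1 : dist a' b' = dist a b)
    (h2 : dist b' c' = dist b c)
    (h3 : dist a' c' = dist a d + dist d c)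
    (h4 : d' ∈ segment ℝ a' c')
    (h5 : dist a' d' = dist a d) :
    (∠ a d b + ∠ b d c > Real.pi ↔ dist b' d' > dist b d) ∧
      (∠ a d b + ∠ b d c > Real.pi →
        ∠ b' a' d' > ∠ b a d ∧ ∠ b' c' d' > ∠ b c d) := by
  have hd : d ∈ affineSpan ℝ ({b, d} : Set (EuclideanSpace ℝ (Fin 2))) :=
    mem_affineSpan ℝ (by simp)
  have had : a ≠ d := fun h => hopp.left_notMem (h ▸ hd)
  have hcd : c ≠ d := fun h => hopp.right_notMem (h ▸ hd)
  have hc'd' : dist c' d' = dist c d := by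
    rw [dist_comm, dist_comm c]
    linarith [dist_add_dist_of_mem_segment h4]
  have hsbtw : Sbtw ℝ a' d' c' := by
    refine ⟨mem_segment_iff_wbtw.1 h4, ?_, ?_⟩
    · rw [ne_comm, ← dist_pos, h5]
      exact dist_pos.2 had
    · rw [← dist_pos, dist_comm, hc'd']
      exact dist_pos.2 hcd
  have hiff := dist_lt_dist_iff_pi_lt_angle_add_angle hbd hsbtw h1 h2 h5 hc'd'
  refine ⟨hiff.symm, fun hπ => ⟨?_, ?_⟩⟩
  · exact (angle_lt_angle_iff_dist_lt_dist h1 h5).2 (hiff.2 hπ)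
  · have h2' : dist c' b' = dist c b := by rw [dist_comm, h2, dist_comm]
    exact (angle_lt_angle_iff_dist_lt_dist h2' hc'd').2 (hiff.2 hπ)
end

section
/- Let a, b, c, d be points in the Euclidean plane ℝ² with b ≠ d, such that a and c lie strictly on opposite sides of the line through b and d. Let a', b', c', d' be points in ℝ² such that dist a' b' = dist a b, dist b' c' = dist b c, dist a' c' = dist a d + dist d c, d' lies on the segment [a', c'], and dist a' d' = dist a d. Then ∠ a d b + ∠ b d c = π if and only if dist b' d' = dist b d; moreover, in this case one also has ∠ b' a' d' = ∠ b a d and ∠ b' c' d' = ∠ b c d. -/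
/-!
The segment `[a, c]` meets the line `bd` at some point `p`. Measuring at `d` along the ray
`dp`, `∠ a d b + ∠ b d c` equals `∠ a d c` when `b` is on that ray and `2π - ∠ a d c`
otherwise, so the hypothesis `∠ a d b + ∠ b d c = π` says exactly that `d` lies on `[a, c]`.
Then `abc` and `a'b'c'` are congruent (SSS), which gives the angles at `a'` and `c'`, and SAS
in `bad` gives `dist b' d' = dist b d`. Conversely, SSS in `adb` and `bdc` carries the
straight angle at `d'` back to `d`.
-/

open EuclideanGeometry Real

namespace EuclideanGeometry

variable {V P : Type*} [NormedAddCommGroup V] [InnerProductSpace ℝ V] [MetricSpace P]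
  [NormedAddTorsor V P]

theorem angle_eq_of_side_side_side {a b c a' b' c' : P} (hab : dist a b = dist a' b')
    (hbc : dist b c = dist b' c') (hca : dist c a = dist c' a') : ∠ a b c = ∠ a' b' c' := by
  simpa using angle_eq_of_congruent (side_side_side hab hbc hca) 0 1 2

theorem angle_eq_pi_of_sOppSide_of_angle_add_angle_eq_pi {a b c d : P} (hbd : b ≠ d)
    (hopp : line[ℝ, b, d].SOppSide a c) (h : ∠ a d b + ∠ b d c = π) : ∠ a d c = π := by
  obtain ⟨p, hp, hapc⟩ := hopp.exists_sbtw
  obtain ⟨t, ht⟩ : ∃ t : ℝ, t • (b -ᵥ d) = p -ᵥ d :=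
    vadd_right_mem_affineSpan_pair.1 (by rwa [vsub_vadd])
  rcases le_total 0 t with ht0 | ht0
  · rw [← angle_add_angle_eq_of_sbtw_of_sameRay hapc
      (ht ▸ SameRay.sameRay_nonneg_smul_left _ ht0) hbd, h]
  · have hbde := sbtw_pointReflection_of_ne ℝ hbd.symm
    have hpe : p -ᵥ d = (-t) • (AffineEquiv.pointReflection ℝ d b -ᵥ d) := by
      rw [← ht, AffineEquiv.pointReflection_apply, vadd_vsub, neg_smul, ← smul_neg,
        neg_vsub_eq_vsub_rev]
    have hsum := angle_add_angle_eq_of_sbtw_of_sameRay hapc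
      (hpe ▸ SameRay.sameRay_nonneg_smul_left _ (neg_nonneg.2 ht0)) hbde.ne_right.symm
    rw [angle_pointReflection_right, angle_comm _ d c, angle_pointReflection_right,
      angle_comm c] at hsum
    linarith

theorem angle_eq_and_dist_eq_of_angle_eq_pi {a b c d a' b' c' d' : P} (hadc : ∠ a d c = π)
    (ha'd'c' : ∠ a' d' c' = π) (hab : dist a' b' = dist a b) (hbc : dist b' c' = dist b c)
    (had : dist a' d' = dist a d) (hdc : dist d' c' = dist d c) :
    ∠ b' a' d' = ∠ b a d ∧ dist b' d' = dist b d := by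
  have hac : dist a' c' = dist a c := by
    rw [dist_eq_add_dist_of_angle_eq_pi hadc, dist_eq_add_dist_of_angle_eq_pi ha'd'c', had,
      dist_comm c' d', hdc, dist_comm d c]
  have hangle : ∠ b' a' d' = ∠ b a d := by
    rw [angle_eq_angle_of_angle_eq_pi b' ha'd'c', angle_eq_angle_of_angle_eq_pi b hadc]
    exact angle_eq_of_side_side_side (by rw [dist_comm, hab, dist_comm]) hac
      (by rw [dist_comm, hbc, dist_comm])
  refine ⟨hangle, ?_⟩
  have hcong := side_angle_side hangle (by rw [dist_comm, hab, dist_comm]) had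
  simpa [dist_comm] using hcong.dist_eq 0 2

end EuclideanGeometry

/-- Aleksandrov's Lemma (equality case). -/
theorem aleksandrov_lemma_eq
    (a b c d a' b' c' d' : EuclideanSpace ℝ (Fin 2))
    (hbd : b ≠ d)
    (hopp : (affineSpan ℝ ({b, d} : Set (EuclideanSpace ℝ (Fin 2)))).SOppSide a c)
    (h1 : dist a' b' = dist a b)
    (h2 : dist b' c' = dist b c)
    (h3 : dist a' c' = dist a d + dist d c)
    (h4 : d' ∈ segment ℝ a' c')
    (h5 : dist a' d' = dist a d) :
    (∠ a d b + ∠ b d c = Real.pi ↔ dist b' d' = dist b d) ∧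
      (∠ a d b + ∠ b d c = Real.pi →
        ∠ b' a' d' = ∠ b a d ∧ ∠ b' c' d' = ∠ b c d) := by
  have hdL := right_mem_affineSpan_pair ℝ b d
  have had : 0 < dist a d := dist_pos.2 fun h => hopp.left_notMem (h ▸ hdL)
  have hdc : 0 < dist d c := dist_pos.2 fun h => hopp.right_notMem (h ▸ hdL)
  have hd'c' : dist d' c' = dist d c := by linarith [dist_add_dist_of_mem_segment h4]
  have hπ' : ∠ a' d' c' = π := angle_eq_pi_iff_sbtw.2
    ⟨mem_segment_iff_wbtw.1 h4, dist_pos.1 (by rwa [dist_comm, h5]),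
      dist_pos.1 (by rwa [hd'c'])⟩
  have forward (hsum : ∠ a d b + ∠ b d c = π) :
      (∠ b' a' d' = ∠ b a d ∧ ∠ b' c' d' = ∠ b c d) ∧ dist b' d' = dist b d := by
    have hπ := angle_eq_pi_of_sOppSide_of_angle_add_angle_eq_pi hbd hopp hsum
    obtain ⟨ha, hbd'⟩ := angle_eq_and_dist_eq_of_angle_eq_pi hπ hπ' h1 h2 h5 hd'c'
    obtain ⟨hc, -⟩ := angle_eq_and_dist_eq_of_angle_eq_pi (angle_comm a d c ▸ hπ)
      (angle_comm a' d' c' ▸ hπ') (by rw [dist_comm, h2, dist_comm])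
      (by rw [dist_comm, h1, dist_comm]) (by rw [dist_comm, hd'c', dist_comm])
      (by rw [dist_comm, h5, dist_comm])
    exact ⟨⟨ha, hc⟩, hbd'⟩
  refine ⟨⟨fun h => (forward h).2, fun hbd' => ?_⟩, fun h => (forward h).1⟩
  have hadb : ∠ a d b = ∠ a' d' b' := angle_eq_of_side_side_side h5.symm
    (by rw [dist_comm d', hbd', dist_comm]) (by rw [dist_comm b', h1, dist_comm])
  have hbdc : ∠ b d c = ∠ b' d' c' := angle_eq_of_side_side_side hbd'.symm hd'c'.symm
    (by rw [dist_comm c', h2, dist_comm])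
  rw [hadb, hbdc, angle_comm]
  exact angle_add_angle_eq_pi_of_angle_eq_pi b' hπ'
end

section
/- Let p, q, s, t be points in the Euclidean plane ℝ² with s ≠ t, such that p and q lie strictly on opposite sides of the line through s and t. If ∠ p s t + ∠ t s q ≥ π, then dist p s + dist s q < dist p t + dist t q. -/
/-!
Write `α = ∠ p s t`, `β = ∠ t s q`. Projecting onto the line `st`, the law of cosines gives
`dist p t ≥ dist p s - dist s t * cos α`, strictly so because `p` is off the line, and likewise
`dist q t ≥ dist q s - dist s t * cos β`. Adding, it remains to see `cos α + cos β ≤ 0`, which is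
`α + β ≥ π`.
-/

open EuclideanGeometry Real

theorem cos_add_cos_nonpos_of_pi_le_add {α β : ℝ} (hα : α ≤ π) (hβ : β ≤ π) (h : π ≤ α + β) :
    cos α + cos β ≤ 0 := by
  have := cos_le_cos_of_nonneg_of_le_pi (sub_nonneg.mpr hβ) hα (by linarith : π - β ≤ α)
  rw [cos_pi_sub] at this
  linarith

namespace EuclideanGeometry

variable {V P : Type*} [NormedAddCommGroup V] [InnerProductSpace ℝ V] [MetricSpace P]
  [NormedAddTorsor V P]

theorem dist_sq_eq_sq_dist_sub_mul_cos_angle_add_sq (p s t : P) :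
    dist p t ^ 2 =
      (dist p s - dist s t * cos (∠ p s t)) ^ 2 + (dist s t * sin (∠ p s t)) ^ 2 := by
  have h := law_cos p s t
  rw [dist_comm t s] at h
  linear_combination h - dist s t ^ 2 * sin_sq_add_cos_sq (∠ p s t)

theorem dist_sub_mul_cos_angle_le (p s t : P) :
    dist p s - dist s t * cos (∠ p s t) ≤ dist p t := by
  refine (abs_le_of_sq_le_sq' ?_ dist_nonneg).2
  rw [dist_sq_eq_sq_dist_sub_mul_cos_angle_add_sq p s t]
  exact le_add_of_nonneg_right (sq_nonneg _)

theorem dist_sub_mul_cos_angle_lt {p s t : P} (h : ¬Collinear ℝ ({p, s, t} : Set P)) :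
    dist p s - dist s t * cos (∠ p s t) < dist p t := by
  refine (abs_lt_of_sq_lt_sq' ?_ dist_nonneg).2
  have hst : 0 < dist s t := dist_pos.mpr (ne₂₃_of_not_collinear h)
  have hsin : 0 < sin (∠ p s t) := sin_pos_of_not_collinear h
  rw [dist_sq_eq_sq_dist_sub_mul_cos_angle_add_sq p s t]
  exact lt_add_of_pos_right _ (pow_pos (mul_pos hst hsin) 2)

end EuclideanGeometry

/-- If `p` and `q` lie strictly on opposite sides of the line through `s` and `t`
and the angles at `s` sum to at least `π`, then the path through `s` is strictly
shorter than the path through `t`. -/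
theorem dist_through_s_lt_of_angle_ge_pi
    (p q s t : EuclideanSpace ℝ (Fin 2)) (hst : s ≠ t)
    (hopp : (affineSpan ℝ ({s, t} : Set (EuclideanSpace ℝ (Fin 2)))).SOppSide p q)
    (hang : ∠ p s t + ∠ t s q ≥ Real.pi) :
    dist p s + dist s q < dist p t + dist t q := by
  have hp : ¬Collinear ℝ ({p, s, t} : Set (EuclideanSpace ℝ (Fin 2))) := fun h =>
    hopp.left_notMem (h.mem_affineSpan_of_mem_of_ne (by simp) (by simp) (by simp) hst)
  have hpt := dist_sub_mul_cos_angle_lt hp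
  have hqt := dist_sub_mul_cos_angle_le q s t
  have hcos := cos_add_cos_nonpos_of_pi_le_add (angle_le_pi p s t) (angle_le_pi t s q) hang
  rw [angle_comm q s t, dist_comm q s, dist_comm q t] at hqt
  nlinarith [mul_nonpos_of_nonneg_of_nonpos (dist_nonneg (x := s) (y := t)) hcos]
end

section
/- Let p, q, s, t be points in the Euclidean plane ℝ² with s ≠ t, such that p and q lie strictly on opposite sides of the line through s and t, and suppose ∠ p s t + ∠ t s q > π. Then s lies in the (topological) interior of the convex hull of {p, t, q}. -/
/-!
The segment `[p, q]` crosses the line `st` at a point `x`. If `x` were on the ray from `s`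
through `t`, the two angles would add up to `∠ p s q ≤ π`; hence `s` lies strictly between
`t` and `x`, and `s` is a combination of `p`, `t`, `q` with positive weights. Since `p` is off
the line, the three points form an affine basis of the plane, whose open triangle is the set of
points with positive barycentric coordinates.
-/

open EuclideanGeometry

theorem sbtw_of_mem_affineSpan_pair_of_not_sameRay {R V P : Type*} [Field R] [LinearOrder R]
    [IsStrictOrderedRing R] [AddCommGroup V] [Module R V] [AddTorsor V P] {s t x : P}
    (hx : x ∈ line[R, s, t]) (hray : ¬SameRay R (x -ᵥ s) (t -ᵥ s)) : Sbtw R t s x := by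
  have hxs : x ≠ s := by
    rintro rfl
    simp at hray
  have hts : t ≠ s := by
    rintro rfl
    simp at hray
  obtain ⟨r, hr⟩ :=
    vadd_left_mem_affineSpan_pair.1 (by rwa [vsub_vadd] : (x -ᵥ s) +ᵥ s ∈ line[R, s, t])
  have hr0 : r < 0 := by
    by_contra! h
    exact hray (hr ▸ SameRay.sameRay_nonneg_smul_left _ h)
  refine ⟨wbtw_iff_sameRay_vsub.2 ?_, fun h => hts h.symm, fun h => hxs h.symm⟩
  rw [← hr, ← neg_vsub_eq_vsub_rev t s]
  exact sameRay_neg_smul_right_iff.2 (.inl hr0.le)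

theorem affineIndependent_of_notMem_of_wbtw_of_wbtw {R V P : Type*} [Field R] [PartialOrder R]
    [AddCommGroup V] [Module R V] [AddTorsor V P] {p q s t x : P} (hp : p ∉ line[R, s, t])
    (hx : Wbtw R p x q) (hs : Wbtw R t s x) (hst : s ≠ t) : AffineIndependent R ![p, t, q] := by
  rw [affineIndependent_iff_not_collinear_set]
  intro hcol
  have hx' : x ∈ affineSpan R {p, t, q} :=
    affineSpan_mono R (by simp [Set.insert_subset_iff]) hx.mem_affineSpan
  have hs' : s ∈ affineSpan R {x, p, t, q} :=
    affineSpan_mono R (by simp [Set.insert_subset_iff]) hs.mem_affineSpan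
  have hcol' := (collinear_insert_iff_of_mem_affineSpan hs').2
    ((collinear_insert_iff_of_mem_affineSpan hx').2 hcol)
  exact hp (hcol'.mem_affineSpan_of_mem_of_ne (by simp) (by simp) (by simp) hst)

theorem mem_interior_convexHull_of_sbtw_of_sbtw {E : Type*} [NormedAddCommGroup E]
    [NormedSpace ℝ E] (hE : Module.finrank ℝ E = 2) {p q s t x : E}
    (hind : AffineIndependent ℝ ![p, t, q]) (hx : Sbtw ℝ p x q) (hs : Sbtw ℝ t s x) :
    s ∈ interior (convexHull ℝ {p, t, q}) := by
  have : FiniteDimensional ℝ E := Module.finite_of_finrank_eq_succ hE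
  have htot : affineSpan ℝ (Set.range ![p, t, q]) = ⊤ := by
    rw [hind.affineSpan_eq_top_iff_card_eq_finrank_add_one, hE]
    simp
  let b : AffineBasis (Fin 3) ℝ E := ⟨![p, t, q], hind, htot⟩
  have hrange : Set.range b = {p, t, q} := by
    show Set.range ![p, t, q] = _
    simp_rw [Matrix.range_cons, Matrix.range_empty, Set.singleton_union, insert_empty_eq]
  obtain ⟨μ, ⟨hμ0, hμ1⟩, rfl⟩ := hx.mem_image_Ioo
  obtain ⟨l, ⟨hl0, hl1⟩, rfl⟩ := hs.mem_image_Ioo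
  rw [← hrange, b.interior_convexHull]
  intro i
  rw [show p = b 0 from rfl, show t = b 1 from rfl, show q = b 2 from rfl,
    AffineMap.apply_lineMap, AffineMap.apply_lineMap]
  fin_cases i <;> simp [AffineMap.lineMap_apply_ring'] <;> nlinarith

/-- If `p` and `q` lie strictly on opposite sides of the line through `s` and `t`
and the angles at `s` sum to more than `π`, then `s` lies in the interior of the
convex hull of `{p, t, q}`. -/
theorem mem_interior_convexHull_of_angle_gt_pi
    (p q s t : EuclideanSpace ℝ (Fin 2)) (hst : s ≠ t)
    (hopp : (affineSpan ℝ ({s, t} : Set (EuclideanSpace ℝ (Fin 2)))).SOppSide p q)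
    (hang : ∠ p s t + ∠ t s q > Real.pi) :
    s ∈ interior (convexHull ℝ ({p, t, q} : Set (EuclideanSpace ℝ (Fin 2)))) := by
  obtain ⟨x, hxL, hpxq⟩ := hopp.exists_sbtw
  have hray : ¬SameRay ℝ (x -ᵥ s) (t -ᵥ s) := fun hray => by
    have hsum := angle_add_angle_eq_of_sbtw_of_sameRay hpxq hray hst.symm
    linarith [angle_le_pi p s q]
  have htsx : Sbtw ℝ t s x := sbtw_of_mem_affineSpan_pair_of_not_sameRay hxL hray
  exact mem_interior_convexHull_of_sbtw_of_sbtw finrank_euclideanSpace_fin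
    (affineIndependent_of_notMem_of_wbtw_of_wbtw hopp.2.1 hpxq.wbtw htsx.wbtw hst) hpxq htsx
end

section
/- Let a, b ∈ ℝ² and let p ∈ ℝ² be a point not lying on the segment [a, b]. Let (s_n) and (t_n) be sequences of points of the segment [a, b] such that dist s_n t_n → 0 as n → ∞. Then the angles ∠ s_n p t_n at the vertex p converge to 0. -/
open Filter Topology EuclideanGeometry Real
open scoped Uniformity

/-!
On the compact set `[a, b] × [a, b]` the map `(x, y) ↦ ∠ x p y` is continuous, since `p`
avoids the segment, hence uniformly continuous. So `∠ sₙ p tₙ` is uniformly close to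
`∠ sₙ p sₙ = 0`.
-/

theorem UniformContinuousOn.tendsto_uniformity_comp {α β ι : Type*} [UniformSpace α]
    [UniformSpace β] {f : α → β} {S : Set α} (hf : UniformContinuousOn f S) {l : Filter ι}
    {x y : ι → α} (hx : ∀ n, x n ∈ S) (hy : ∀ n, y n ∈ S)
    (hxy : Tendsto (fun n => (x n, y n)) l (𝓤 α)) :
    Tendsto (fun n => (f (x n), f (y n))) l (𝓤 β) :=
  Tendsto.comp hf <| tendsto_inf.2
    ⟨hxy, tendsto_principal.2 <| .of_forall fun n => Set.mk_mem_prod (hx n) (hy n)⟩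

theorem isCompact_segment {E : Type*} [AddCommGroup E] [Module ℝ E] [TopologicalSpace E]
    [IsTopologicalAddGroup E] [ContinuousSMul ℝ E] (a b : E) : IsCompact (segment ℝ a b) := by
  simpa only [convexHull_pair] using (Set.toFinite {a, b}).isCompact_convexHull ℝ

namespace EuclideanGeometry

variable {V P : Type*} [NormedAddCommGroup V] [InnerProductSpace ℝ V] [MetricSpace P]
  [NormedAddTorsor V P]

theorem continuousOn_angle_of_notMem {p : P} {K : Set P} (hp : p ∉ K) :
    ContinuousOn (fun q : P × P => ∠ q.1 p q.2) (K ×ˢ K) := by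
  intro q hq
  have hne : ∀ x ∈ K, x ≠ p := fun x hx h => hp (h ▸ hx)
  exact ((continuousAt_angle (x := (q.1, p, q.2)) (hne _ hq.1) (hne _ hq.2)).comp
    (f := fun q : P × P => (q.1, p, q.2)) (by fun_prop)).continuousWithinAt

theorem tendsto_angle_zero_of_isCompact {p : P} {K : Set P} (hK : IsCompact K) (hp : p ∉ K)
    {s t : ℕ → P} (hs : ∀ n, s n ∈ K) (ht : ∀ n, t n ∈ K)
    (hst : Tendsto (fun n => dist (s n) (t n)) atTop (𝓝 0)) :
    Tendsto (fun n => ∠ (s n) p (t n)) atTop (𝓝 0) := by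
  have huc : UniformContinuousOn (fun q : P × P => ∠ q.1 p q.2) (K ×ˢ K) :=
    (hK.prod hK).uniformContinuousOn_of_continuous (continuousOn_angle_of_notMem hp)
  have hpairs : Tendsto (fun n => ((s n, s n), (s n, t n))) atTop (𝓤 (P × P)) := by
    rw [tendsto_uniformity_iff_dist_tendsto_zero]
    simpa only [Prod.dist_eq, dist_self, max_eq_right dist_nonneg] using hst
  have hclose :=
    huc.tendsto_uniformity_comp (fun n => ⟨hs n, hs n⟩) (fun n => ⟨hs n, ht n⟩) hpairs
  have hzero : ∀ n, ∠ (s n) p (s n) = 0 := fun n =>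
    angle_self_of_ne fun h => hp (h ▸ hs n)
  refine (tendsto_const_nhds (x := (0 : ℝ))).congr_dist ?_
  simpa only [hzero] using tendsto_uniformity_iff_dist_tendsto_zero.1 hclose

end EuclideanGeometry

/-- If `p` does not lie on the segment `[a, b]` and `(s_n)`, `(t_n)` are sequences
of points of `[a, b]` with `dist (s n) (t n) → 0`, then the angles at `p` tend to `0`. -/
theorem angle_tendsto_zero_of_dist_tendsto_zero
    (a b p : EuclideanSpace ℝ (Fin 2)) (hp : p ∉ segment ℝ a b)
    (s t : ℕ → EuclideanSpace ℝ (Fin 2))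
    (hs : ∀ n, s n ∈ segment ℝ a b) (ht : ∀ n, t n ∈ segment ℝ a b)
    (hst : Tendsto (fun n => dist (s n) (t n)) atTop (𝓝 0)) :
    Tendsto (fun n => ∠ (s n) p (t n)) atTop (𝓝 0) :=
  tendsto_angle_zero_of_isCompact (isCompact_segment a b) hp hs ht hst
end

section
/- Let X be a geodesic metric space satisfying the CAT(0) comparison inequality, let e be the image of a geodesic from a to b in X (a geodesic segment), and let p ∈ X be a point not lying on e. If (s_n) and (t_n) are sequences of points of e with s_n ≠ t_n for all n and dist s_n t_n → 0 as n → ∞, then the Alexandrov angles ∠_p(s_n, t_n) converge to 0. -/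
open Filter Topology

/-- `γ` is a geodesic from `x` to `y`, parametrized by arclength on `[0, dist x y]`. -/
def IsGeodesicFrom {X : Type*} [MetricSpace X] (x y : X) (γ : ℝ → X) : Prop :=
  γ 0 = x ∧ γ (dist x y) = y ∧
    ∀ s ∈ Set.Icc (0 : ℝ) (dist x y), ∀ t ∈ Set.Icc (0 : ℝ) (dist x y),
      dist (γ s) (γ t) = |s - t|

/-- A metric space is geodesic if any two points are joined by a geodesic. -/
def IsGeodesicSpace (X : Type*) [MetricSpace X] : Prop :=
  ∀ x y : X, ∃ γ : ℝ → X, IsGeodesicFrom x y γ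

/-- The CAT(0) comparison inequality. -/
def SatisfiesCAT0 (X : Type*) [MetricSpace X] : Prop :=
  ∀ y z : X, y ≠ z → ∀ γ : ℝ → X, IsGeodesicFrom y z γ →
    ∀ x : X, ∀ s ∈ Set.Icc (0 : ℝ) (dist y z),
      dist x (γ s) ^ 2 ≤ (1 - s / dist y z) * dist x y ^ 2 + (s / dist y z) * dist x z ^ 2
        - (s / dist y z) * (1 - s / dist y z) * dist y z ^ 2

/-- The comparison angle at `p` between `x` and `y`, defined by the Euclidean
law of cosines. -/
noncomputable def comparisonAngle {X : Type*} [MetricSpace X] (p x y : X) : ℝ :=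
  Real.arccos ((dist p x ^ 2 + dist p y ^ 2 - dist x y ^ 2) / (2 * dist p x * dist p y))

/-- The Alexandrov angle at `p` between two geodesics `γ`, `γ'` issuing from `p`:
the limsup, as `(u, v) → (0⁺, 0⁺)`, of the comparison angles at `p` between
`γ u` and `γ' v`. -/
noncomputable def alexandrovAngle {X : Type*} [MetricSpace X] (p : X) (γ γ' : ℝ → X) : ℝ :=
  Filter.limsup (fun uv : ℝ × ℝ => comparisonAngle p (γ uv.1) (γ' uv.2))
    ((𝓝[>] (0 : ℝ)) ×ˢ (𝓝[>] (0 : ℝ)))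

/-!
In a CAT(0) space the comparison angle at `p` between points of the geodesics `[p, x]` and
`[p, y]` never exceeds the comparison angle `∠̄_p(x, y)`, so the Alexandrov angle is bounded by
`∠̄_p(x, y)`. As `p` has positive distance `d` from the compact segment `e`, the law of cosines
gives `cos ∠̄_p(s_n, t_n) ≥ 1 - dist(s_n, t_n)² / (2d²) → 1`.
-/

theorem IsGeodesicFrom.dist_apply {X : Type*} [MetricSpace X] {x y : X} {γ : ℝ → X}
    (h : IsGeodesicFrom x y γ) {u : ℝ} (hu : u ∈ Set.Icc 0 (dist x y)) :
    dist x (γ u) = u := by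
  have := h.2.2 0 ⟨le_rfl, dist_nonneg⟩ u hu
  rw [h.1, zero_sub, abs_neg, abs_of_nonneg hu.1] at this
  exact this

theorem IsGeodesicFrom.isCompact_image {X : Type*} [MetricSpace X] {x y : X} {γ : ℝ → X}
    (h : IsGeodesicFrom x y γ) : IsCompact (γ '' Set.Icc 0 (dist x y)) := by
  have hlip : LipschitzOnWith 1 γ (Set.Icc 0 (dist x y)) :=
    LipschitzOnWith.of_dist_le_mul fun u hu v hv => by
      rw [h.2.2 u hu v hv, Real.dist_eq, NNReal.coe_one, one_mul]
  exact isCompact_Icc.image_of_continuousOn hlip.continuousOn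

theorem comparisonAngle_comm {X : Type*} [MetricSpace X] (p x y : X) :
    comparisonAngle p x y = comparisonAngle p y x := by
  unfold comparisonAngle
  rw [dist_comm x y]
  ring_nf

theorem comparisonAngle_nonneg {X : Type*} [MetricSpace X] (p x y : X) :
    0 ≤ comparisonAngle p x y :=
  Real.arccos_nonneg _

theorem comparisonAngle_le_pi {X : Type*} [MetricSpace X] (p x y : X) :
    comparisonAngle p x y ≤ Real.pi :=
  Real.arccos_le_pi _

/-- After clearing denominators, the cosine inequality is exactly the CAT(0) inequality for the
triangle `p, x, q`. -/
theorem comparisonAngle_geodesic_le {X : Type*} [MetricSpace X] (hcat : SatisfiesCAT0 X)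
    {p x q : X} {γ : ℝ → X} (hγ : IsGeodesicFrom p x γ) (hpq : p ≠ q)
    {u : ℝ} (hu : u ∈ Set.Ioc 0 (dist p x)) :
    comparisonAngle p (γ u) q ≤ comparisonAngle p x q := by
  have hL : 0 < dist p x := hu.1.trans_le hu.2
  have hq : 0 < dist p q := dist_pos.2 hpq
  have hu' : u ∈ Set.Icc 0 (dist p x) := ⟨hu.1.le, hu.2⟩
  have hcat' := hcat p x (dist_pos.1 hL) γ hγ q u hu'
  unfold comparisonAngle
  apply Real.arccos_le_arccos
  have hu0 := hu.1
  rw [hγ.dist_apply hu', dist_comm (γ u) q, div_le_div_iff₀ (by positivity) (by positivity)]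
  rw [dist_comm q p, dist_comm q x] at hcat'
  have key : dist p x * dist q (γ u) ^ 2 ≤ (dist p x - u) * dist p q ^ 2 + u * dist x q ^ 2
      - u * (dist p x - u) * dist p x := by
    have := mul_le_mul_of_nonneg_left hcat' hL.le
    field_simp at this
    nlinarith [this]
  nlinarith [key, hu.1, hq]

theorem comparisonAngle_geodesics_le {X : Type*} [MetricSpace X] (hcat : SatisfiesCAT0 X)
    {p x y : X} {γ γ' : ℝ → X} (hγ : IsGeodesicFrom p x γ) (hγ' : IsGeodesicFrom p y γ')
    {u v : ℝ} (hu : u ∈ Set.Ioc 0 (dist p x)) (hv : v ∈ Set.Ioc 0 (dist p y)) :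
    comparisonAngle p (γ u) (γ' v) ≤ comparisonAngle p x y := by
  have hpv : p ≠ γ' v := by
    rw [← dist_pos, hγ'.dist_apply ⟨hv.1.le, hv.2⟩]
    exact hv.1
  calc comparisonAngle p (γ u) (γ' v) ≤ comparisonAngle p x (γ' v) :=
        comparisonAngle_geodesic_le hcat hγ hpv hu
    _ = comparisonAngle p (γ' v) x := comparisonAngle_comm _ _ _
    _ ≤ comparisonAngle p y x :=
        comparisonAngle_geodesic_le hcat hγ' (dist_pos.1 (hu.1.trans_le hu.2)) hv
    _ = comparisonAngle p x y := comparisonAngle_comm _ _ _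

theorem alexandrovAngle_nonneg {X : Type*} [MetricSpace X] (p : X) (γ γ' : ℝ → X) :
    0 ≤ alexandrovAngle p γ γ' :=
  le_limsup_of_frequently_le (Frequently.of_forall fun _ => comparisonAngle_nonneg _ _ _)
    (isBoundedUnder_of ⟨Real.pi, fun _ => comparisonAngle_le_pi _ _ _⟩)

theorem alexandrovAngle_le_comparisonAngle {X : Type*} [MetricSpace X] (hcat : SatisfiesCAT0 X)
    {p x y : X} (hpx : p ≠ x) (hpy : p ≠ y) {γ γ' : ℝ → X}
    (hγ : IsGeodesicFrom p x γ) (hγ' : IsGeodesicFrom p y γ') :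
    alexandrovAngle p γ γ' ≤ comparisonAngle p x y := by
  have hx : Set.Ioc 0 (dist p x) ∈ 𝓝[>] (0 : ℝ) :=
    Ioc_mem_nhdsGT_of_mem ⟨le_rfl, dist_pos.2 hpx⟩
  have hy : Set.Ioc 0 (dist p y) ∈ 𝓝[>] (0 : ℝ) :=
    Ioc_mem_nhdsGT_of_mem ⟨le_rfl, dist_pos.2 hpy⟩
  refine limsup_le_of_le (isCoboundedUnder_le_of_le _ fun _ => comparisonAngle_nonneg _ _ _) ?_
  filter_upwards [prod_mem_prod hx hy] with uv huv
  exact comparisonAngle_geodesics_le hcat hγ hγ' huv.1 huv.2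

theorem comparisonAngle_le_arccos {X : Type*} [MetricSpace X] {p x y : X} {d : ℝ} (hd : 0 < d)
    (hdx : d ≤ dist p x) (hdy : d ≤ dist p y) :
    comparisonAngle p x y ≤ Real.arccos (1 - dist x y ^ 2 / (2 * d ^ 2)) := by
  unfold comparisonAngle
  apply Real.arccos_le_arccos
  have hd2 : 2 * d ^ 2 ≤ 2 * dist p x * dist p y := by nlinarith
  calc 1 - dist x y ^ 2 / (2 * d ^ 2) ≤ 1 - dist x y ^ 2 / (2 * dist p x * dist p y) := by
        gcongr
    _ ≤ (dist p x ^ 2 + dist p y ^ 2 - dist x y ^ 2) / (2 * dist p x * dist p y) := by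
        rw [le_div_iff₀ (by nlinarith), sub_mul, div_mul_cancel₀ _ (by nlinarith)]
        nlinarith [sq_nonneg (dist p x - dist p y)]

theorem tendsto_comparisonAngle_zero {X ι : Type*} [MetricSpace X] {l : Filter ι}
    {p : X} {x y : ι → X} {d : ℝ} (hd : 0 < d) (hdx : ∀ i, d ≤ dist p (x i))
    (hdy : ∀ i, d ≤ dist p (y i)) (hxy : Tendsto (fun i => dist (x i) (y i)) l (𝓝 0)) :
    Tendsto (fun i => comparisonAngle p (x i) (y i)) l (𝓝 0) := by
  have hcos : Tendsto (fun i => 1 - dist (x i) (y i) ^ 2 / (2 * d ^ 2)) l (𝓝 1) := by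
    simpa using tendsto_const_nhds.sub ((hxy.pow 2).div_const (2 * d ^ 2))
  have harccos := (Real.continuous_arccos.tendsto 1).comp hcos
  rw [Real.arccos_one] at harccos
  exact tendsto_of_tendsto_of_tendsto_of_le_of_le tendsto_const_nhds harccos
    (fun i => comparisonAngle_nonneg _ _ _) fun i => comparisonAngle_le_arccos hd (hdx i) (hdy i)

theorem alexandrovAngle_tendsto_zero_general {X : Type*} [MetricSpace X]
    (hcat : SatisfiesCAT0 X)
    (a b : X) (γab : ℝ → X) (hγab : IsGeodesicFrom a b γab)
    (e : Set X) (he : e = γab '' Set.Icc 0 (dist a b))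
    (p : X) (hp : p ∉ e)
    (s t : ℕ → X) (hs : ∀ n, s n ∈ e) (ht : ∀ n, t n ∈ e)
    (hdist : Tendsto (fun n => dist (s n) (t n)) atTop (𝓝 0)) :
    ∀ γ γ' : ℕ → ℝ → X,
      (∀ n, IsGeodesicFrom p (s n) (γ n)) → (∀ n, IsGeodesicFrom p (t n) (γ' n)) →
      Tendsto (fun n => alexandrovAngle p (γ n) (γ' n)) atTop (𝓝 0) := by
  intro γ γ' hγ hγ'
  have hne : e.Nonempty := he ▸ ⟨a, 0, ⟨le_rfl, dist_nonneg⟩, hγab.1⟩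
  have hd : 0 < Metric.infDist p e :=
    ((he ▸ hγab.isCompact_image).isClosed.notMem_iff_infDist_pos hne).1 hp
  have hps : ∀ n, p ≠ s n := fun n h => hp (h ▸ hs n)
  have hpt : ∀ n, p ≠ t n := fun n h => hp (h ▸ ht n)
  exact tendsto_of_tendsto_of_tendsto_of_le_of_le tendsto_const_nhds
    (tendsto_comparisonAngle_zero hd (fun n => Metric.infDist_le_dist_of_mem (hs n))
      (fun n => Metric.infDist_le_dist_of_mem (ht n)) hdist)
    (fun n => alexandrovAngle_nonneg _ _ _)
    fun n => alexandrovAngle_le_comparisonAngle hcat (hps n) (hpt n) (hγ n) (hγ' n)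

/-- Let `e` be a geodesic segment from `a` to `b` in a geodesic CAT(0) space and
let `p ∉ e`. If `(s_n)` and `(t_n)` are sequences of points of `e` with
`s n ≠ t n` and `dist (s n) (t n) → 0`, then the Alexandrov angles at `p` between
`s n` and `t n` converge to `0`. -/
theorem alexandrovAngle_tendsto_zero {X : Type*} [MetricSpace X]
    (hgeo : IsGeodesicSpace X) (hcat : SatisfiesCAT0 X)
    (a b : X) (γab : ℝ → X) (hγab : IsGeodesicFrom a b γab)
    (e : Set X) (he : e = γab '' Set.Icc 0 (dist a b))
    (p : X) (hp : p ∉ e)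
    (s t : ℕ → X) (hs : ∀ n, s n ∈ e) (ht : ∀ n, t n ∈ e)
    (hne : ∀ n, s n ≠ t n)
    (hdist : Tendsto (fun n => dist (s n) (t n)) atTop (𝓝 0)) :
    ∀ γ γ' : ℕ → ℝ → X,
      (∀ n, IsGeodesicFrom p (s n) (γ n)) → (∀ n, IsGeodesicFrom p (t n) (γ' n)) →
      Tendsto (fun n => alexandrovAngle p (γ n) (γ' n)) atTop (𝓝 0) :=
  alexandrovAngle_tendsto_zero_general hcat a b γab hγab e he p hp s t hs ht hdist
end

section
/- Let a, b, p, q be points in the Euclidean plane ℝ² with a ≠ b, let L be the line through a and b, and suppose p and q lie strictly on opposite sides of L. Then for every point s ∈ L with s ≠ a, one has ∠ p s a + ∠ a s q = π if and only if s lies strictly between p and q (i.e., s is in the open segment from p to q). -/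
/-!
Choose an orientation of the plane. The unoriented angles `∠ p s a` and `∠ a s q` are the
absolute values of the oriented angles `∡ p s a` and `∡ a s q`, and these have the same nonzero
sign because `p` and `q` lie strictly on opposite sides of the line. For two angles of the same
nonzero sign, the absolute values sum to `π` exactly when the angles themselves sum to `π`; and
`∡ p s a + ∡ a s q = ∡ p s q` equals `π` exactly when `s` lies strictly between `p` and `q`.
-/

open EuclideanGeometry Real Module

namespace Real.Angle

theorem abs_toReal_add_abs_toReal_eq_pi_iff {θ ψ : Angle} (hs : θ.sign = ψ.sign)
    (h0 : θ.sign ≠ 0) : |θ.toReal| + |ψ.toReal| = π ↔ θ + ψ = π := by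
  refine ⟨fun h => ?_, fun h =>
    abs_toReal_add_abs_toReal_eq_pi_of_two_zsmul_add_eq_zero_of_sign_eq (by simp [h]) hs h0⟩
  have hsum : |θ.toReal + ψ.toReal| = π := by
    grind [toReal_neg_iff_sign_neg, abs_add_eq_add_abs_iff]
  rw [← coe_toReal θ, ← coe_toReal ψ, ← coe_add]
  rcases (abs_eq pi_nonneg).1 hsum with h | h <;> simp [h]

end Real.Angle

namespace EuclideanGeometry

variable {V P : Type*} [NormedAddCommGroup V] [InnerProductSpace ℝ V] [MetricSpace P]
  [NormedAddTorsor V P] [Fact (finrank ℝ V = 2)]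

section Oriented

variable [Module.Oriented ℝ V (Fin 2)]

theorem oangle_sign_ne_zero_of_notMem {L : AffineSubspace ℝ P} {p s a : P} (hp : p ∉ L)
    (hs : s ∈ L) (ha : a ∈ L) (hsa : s ≠ a) : (∡ p s a).sign ≠ 0 :=
  Real.Angle.sign_ne_zero_iff.2 <| oangle_ne_zero_and_ne_pi_iff_affineIndependent.2 <|
    affineIndependent_of_ne_of_notMem_of_mem_of_mem hsa hp hs ha

theorem _root_.AffineSubspace.SOppSide.oangle_sign_eq {L : AffineSubspace ℝ P} {p q s a : P}
    (hpq : L.SOppSide p q) (hs : s ∈ L) (ha : a ∈ L) : (∡ a s q).sign = (∡ p s a).sign := by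
  rw [← oangle_rotate_sign a s q, ← oangle_swap₁₃_sign a q s, hpq.oangle_sign_eq_neg ha hs,
    neg_neg]
  exact (oangle_rotate_sign a p s).symm

end Oriented

theorem angle_add_angle_eq_pi_iff_sbtw_of_sOppSide {L : AffineSubspace ℝ P} {p q s a : P}
    (hpq : L.SOppSide p q) (hs : s ∈ L) (ha : a ∈ L) (hsa : s ≠ a) :
    ∠ p s a + ∠ a s q = π ↔ Sbtw ℝ p s q := by
  have : FiniteDimensional ℝ V := .of_fact_finrank_eq_two
  let _ : Module.Oriented ℝ V (Fin 2) :=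
    ⟨(Module.finBasisOfFinrankEq ℝ V Fact.out).orientation⟩
  have hps : p ≠ s := fun h => hpq.left_notMem (h ▸ hs)
  have hqs : q ≠ s := fun h => hpq.right_notMem (h ▸ hs)
  rw [angle_eq_abs_oangle_toReal hps hsa.symm, angle_eq_abs_oangle_toReal hsa.symm hqs,
    Real.Angle.abs_toReal_add_abs_toReal_eq_pi_iff (hpq.oangle_sign_eq hs ha).symm
      (oangle_sign_ne_zero_of_notMem hpq.left_notMem hs ha hsa),
    oangle_add hps hsa.symm hqs, oangle_eq_pi_iff_sbtw]

end EuclideanGeometry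

theorem angle_add_angle_eq_pi_iff_sbtw_general
    (a b p q : EuclideanSpace ℝ (Fin 2))
    (hopp : (affineSpan ℝ ({a, b} : Set (EuclideanSpace ℝ (Fin 2)))).SOppSide p q) :
    ∀ s ∈ affineSpan ℝ ({a, b} : Set (EuclideanSpace ℝ (Fin 2))), s ≠ a →
      (∠ p s a + ∠ a s q = Real.pi ↔ Sbtw ℝ p s q) := by
  have : Fact (finrank ℝ (EuclideanSpace ℝ (Fin 2)) = 2) := ⟨finrank_euclideanSpace_fin⟩
  exact fun s hs hsa => angle_add_angle_eq_pi_iff_sbtw_of_sOppSide hopp hs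
    (left_mem_affineSpan_pair ℝ a b) hsa

/-- Let `p` and `q` lie strictly on opposite sides of the line `L` through `a` and
`b`. Then for `s ∈ L` with `s ≠ a`, the angles at `s` towards `a` sum to `π` if and
only if `s` lies strictly between `p` and `q`. -/
theorem angle_add_angle_eq_pi_iff_sbtw
    (a b p q : EuclideanSpace ℝ (Fin 2)) (hab : a ≠ b)
    (hopp : (affineSpan ℝ ({a, b} : Set (EuclideanSpace ℝ (Fin 2)))).SOppSide p q) :
    ∀ s ∈ affineSpan ℝ ({a, b} : Set (EuclideanSpace ℝ (Fin 2))), s ≠ a →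
      (∠ p s a + ∠ a s q = Real.pi ↔ Sbtw ℝ p s q) :=
  angle_add_angle_eq_pi_iff_sbtw_general a b p q hopp
end
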